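/- The Burau representation of the braid group B_n is q-unitary: for every β ∈ B_n and all v, w ∈ ℂ(q)^{n−1}, one has ⟨ρ_n(β)(v), ρ_n(β)(w)⟩ = ⟨v, w⟩, where ⟨·,·⟩ is the sesquilinear q-form described in the context. -/

import Mathlib

set_option synthInstance.maxHeartbeats 400000

/-- The alternating word `i j i j ⋯` with `m` factors, as an element of the free group. -/
def altWord {α : Type*} (i j : α) : ℕ → FreeGroup α
  | 0 => 1
  | m + 1 => FreeGroup.of i * altWord j i m

/-- The braid relations associated to a Coxeter matrix. -/
def artinRels {B : Type*} (M : CoxeterMatrix B) : Set (FreeGroup B) :=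
  {r | ∃ i j : B, M i j ≠ 0 ∧ r = altWord i j (M i j) * (altWord j i (M i j))⁻¹}

/-- The Artin–Tits group of a Coxeter matrix. -/
abbrev ArtinTitsGroup {B : Type*} (M : CoxeterMatrix B) := PresentedGroup (artinRels M)

/-- The standard generators of the Artin–Tits group. -/
def artinσ {B : Type*} (M : CoxeterMatrix B) (i : B) : ArtinTitsGroup M := PresentedGroup.of i

/-- The braid group on `n` strands, presented with generators `σ_1, …, σ_{n-1}`
(indexed by `Fin (n-1)`) and the braid relations. -/
abbrev BraidGroup (n : ℕ) := ArtinTitsGroup (CoxeterMatrix.Aₙ (n - 1))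

/-- The standard generator `σ_{i+1}` of the braid group `B_n`, for `i : Fin (n-1)`. -/
def braidσ (n : ℕ) (i : Fin (n - 1)) : BraidGroup n := artinσ _ i

/-- The matrix of the reduced Burau action of the generator `σ_{i+1}` on `ℂ(q)^{n-1}`:
on the standard basis, `αᵢ ↦ -q² αᵢ`, `αⱼ ↦ αⱼ + q αᵢ` if `|i-j| = 1`, and `αⱼ ↦ αⱼ`
if `|i-j| ≥ 2`. -/
noncomputable def burauMat (n : ℕ) (i : Fin (n - 1)) :
    Matrix (Fin (n - 1)) (Fin (n - 1)) (RatFunc ℂ) :=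
  Matrix.of fun k j =>
    if j = i then (if k = i then -(RatFunc.X ^ 2) else 0)
    else (if k = j then 1 else 0) +
      (if k = i ∧ ((i : ℕ) + 1 = (j : ℕ) ∨ (j : ℕ) + 1 = (i : ℕ)) then RatFunc.X else 0)

/-- The sesquilinear `q`-form on `ℂ(q)^{n-1}`, twisted by `bar` in the first variable,
with values `⟨αᵢ, αᵢ⟩ = 1 + q²`, `⟨αᵢ, αⱼ⟩ = -q` if `|i-j| = 1`, and `0` if `|i-j| ≥ 2`. -/
noncomputable def burauForm (n : ℕ) (bar : RatFunc ℂ → RatFunc ℂ)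
    (v w : Fin (n - 1) → RatFunc ℂ) : RatFunc ℂ :=
  ∑ i, ∑ j, bar (v i) * w j *
    (if i = j then 1 + RatFunc.X ^ 2
     else if (i : ℕ) + 1 = (j : ℕ) ∨ (j : ℕ) + 1 = (i : ℕ) then -RatFunc.X else 0)

/-!
Writing `⟨v, w⟩ = bar(v)ᵀ J w` with the Gram matrix `J`, a matrix `g` preserves the form exactly
when `bar(g)ᵀ J g = J`. The invertible matrices with this property form a subgroup of `GL`, so it
suffices that each generator `ρ(σᵢ)` lies in it; for the Burau matrices this is an entrywise
identity of Laurent polynomials that holds because `bar q = q⁻¹`.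
-/

open Matrix

namespace Matrix

variable {ι R : Type*} [Fintype ι] [DecidableEq ι] [CommRing R]

/-- The group of invertible matrices preserving the `σ`-sesquilinear form
`(v, w) ↦ (σ ∘ v) ⬝ᵥ (J *ᵥ w)` with Gram matrix `J`. -/
def isometryGroup (σ : R →+* R) (J : Matrix ι ι R) : Subgroup (GL ι R) where
  carrier := {g | ((g : Matrix ι ι R).map σ)ᵀ * J * g = J}
  one_mem' := by simp [Matrix.map_one σ σ.map_zero σ.map_one]
  mul_mem' {g h} hg hh := by
    simp only [Set.mem_ofPred_eq, Units.val_mul, Matrix.map_mul, transpose_mul] at *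
    calc (h.val.map σ)ᵀ * (g.val.map σ)ᵀ * J * (g.val * h.val)
        = (h.val.map σ)ᵀ * ((g.val.map σ)ᵀ * J * g.val) * h.val := by noncomm_ring
      _ = J := by rw [hg, hh]
  inv_mem' {g} hg := by
    simp only [Set.mem_ofPred_eq] at *
    conv_lhs => rw [← hg]
    calc (g⁻¹.val.map σ)ᵀ * ((g.val.map σ)ᵀ * J * g.val) * g⁻¹.val
        = ((g.val * g⁻¹.val).map σ)ᵀ * J * (g.val * g⁻¹.val) := by
          rw [Matrix.map_mul, transpose_mul]; noncomm_ring
      _ = J := by simp [Matrix.map_one σ σ.map_zero σ.map_one]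

theorem mem_isometryGroup {σ : R →+* R} {J : Matrix ι ι R} {g : GL ι R} :
    g ∈ isometryGroup σ J ↔ ((g : Matrix ι ι R).map σ)ᵀ * J * g = J :=
  Iff.rfl

theorem dotProduct_mulVec_of_mem_isometryGroup {σ : R →+* R} {J : Matrix ι ι R} {g : GL ι R}
    (hg : g ∈ isometryGroup σ J) (v w : ι → R) :
    (σ ∘ ((g : Matrix ι ι R) *ᵥ v)) ⬝ᵥ (J *ᵥ ((g : Matrix ι ι R) *ᵥ w)) = (σ ∘ v) ⬝ᵥ (J *ᵥ w) := by
  have hσ : σ ∘ ((g : Matrix ι ι R) *ᵥ v) = (g : Matrix ι ι R).map σ *ᵥ (σ ∘ v) :=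
    funext (σ.map_mulVec _ v)
  rw [hσ, mulVec_mulVec, ← vecMul_transpose, dotProduct_mulVec, vecMul_vecMul, ← mul_assoc,
    mem_isometryGroup.mp hg, ← dotProduct_mulVec]

end Matrix

noncomputable def burauGram (n : ℕ) : Matrix (Fin (n - 1)) (Fin (n - 1)) (RatFunc ℂ) :=
  Matrix.of fun i j =>
    if i = j then 1 + RatFunc.X ^ 2
    else if (i : ℕ) + 1 = (j : ℕ) ∨ (j : ℕ) + 1 = (i : ℕ) then -RatFunc.X else 0

theorem burauForm_eq_dotProduct (n : ℕ) (bar : RatFunc ℂ → RatFunc ℂ)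
    (v w : Fin (n - 1) → RatFunc ℂ) :
    burauForm n bar v w = (bar ∘ v) ⬝ᵥ (burauGram n *ᵥ w) := by
  simp only [burauForm, dotProduct, mulVec, burauGram, of_apply, Function.comp_apply,
    Finset.mul_sum]
  refine Finset.sum_congr rfl fun i _ => Finset.sum_congr rfl fun j _ => ?_
  ring

theorem sum_mul_burauMat (n : ℕ) (i l : Fin (n - 1)) (f : Fin (n - 1) → RatFunc ℂ) :
    ∑ b, f b * burauMat n i b l =
      if l = i then f i * -(RatFunc.X ^ 2)
      else f l + (if (i : ℕ) + 1 = l ∨ (l : ℕ) + 1 = i then f i * RatFunc.X else 0) := by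
  by_cases hl : l = i <;>
    simp [burauMat, hl, mul_ite, mul_add, ite_and, Finset.sum_add_distrib]

theorem sum_map_burauMat_mul (n : ℕ) {bar : RatFunc ℂ →+* RatFunc ℂ}
    (hbar : bar RatFunc.X = RatFunc.X⁻¹) (i k : Fin (n - 1)) (f : Fin (n - 1) → RatFunc ℂ) :
    ∑ a, bar (burauMat n i a k) * f a =
      if k = i then -(RatFunc.X⁻¹ ^ 2) * f i
      else f k + (if (i : ℕ) + 1 = k ∨ (k : ℕ) + 1 = i then RatFunc.X⁻¹ * f i else 0) := by
  by_cases hk : k = i <;>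
    simp [burauMat, hk, hbar, apply_ite bar, ite_mul, add_mul, ite_and, Finset.sum_add_distrib]

theorem burauMat_preserves_burauGram (n : ℕ) {bar : RatFunc ℂ →+* RatFunc ℂ}
    (hbar : bar RatFunc.X = RatFunc.X⁻¹) (i : Fin (n - 1)) :
    ((burauMat n i).map bar)ᵀ * burauGram n * burauMat n i = burauGram n := by
  have hX : (RatFunc.X : RatFunc ℂ) ≠ 0 := RatFunc.X_ne_zero
  ext k l
  simp only [mul_apply, transpose_apply, map_apply]
  rw [sum_mul_burauMat, sum_map_burauMat_mul n hbar, sum_map_burauMat_mul n hbar]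
  simp only [burauGram, of_apply]
  split_ifs <;> simp only [Fin.ext_iff] at * <;>
    first | omega | ring1 | (field_simp; done) | (field_simp; ring1)

theorem PresentedGroup.apply_mem_of_forall {α G : Type*} [Group G] {rels : Set (FreeGroup α)}
    (f : PresentedGroup rels →* G) {H : Subgroup G} (h : ∀ a, f (PresentedGroup.of a) ∈ H)
    (x : PresentedGroup rels) : f x ∈ H := by
  have hH : ⊤ ≤ H.comap f := by
    rw [← PresentedGroup.closure_range_of, Subgroup.closure_le]
    rintro _ ⟨a, rfl⟩
    exact h a
  exact hH (Subgroup.mem_top x)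

theorem statement1_general (n : ℕ)
    (bar : RatFunc ℂ ≃ₐ[ℂ] RatFunc ℂ) (hbar : bar RatFunc.X = (RatFunc.X)⁻¹)
    (ρ : BraidGroup n →* GL (Fin (n - 1)) (RatFunc ℂ))
    (hρ : ∀ i : Fin (n - 1),
      (ρ (braidσ n i) : Matrix (Fin (n - 1)) (Fin (n - 1)) (RatFunc ℂ)) = burauMat n i)
    (β : BraidGroup n) (v w : Fin (n - 1) → RatFunc ℂ) :
    burauForm n bar ((ρ β : Matrix (Fin (n - 1)) (Fin (n - 1)) (RatFunc ℂ)).mulVec v)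
        ((ρ β : Matrix (Fin (n - 1)) (Fin (n - 1)) (RatFunc ℂ)).mulVec w) =
      burauForm n bar v w := by
  have hβ : ρ β ∈ isometryGroup (bar : RatFunc ℂ →+* RatFunc ℂ) (burauGram n) :=
    PresentedGroup.apply_mem_of_forall ρ (fun i => by
      rw [mem_isometryGroup]
      exact (hρ i).symm ▸ burauMat_preserves_burauGram n hbar i) β
  rw [burauForm_eq_dotProduct, burauForm_eq_dotProduct]
  exact dotProduct_mulVec_of_mem_isometryGroup hβ v w

/-- The Burau representation of the braid group `B_n` is `q`-unitary: for every braid `β`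
and vectors `v, w`, one has `⟨ρ(β)v, ρ(β)w⟩ = ⟨v, w⟩`, where `bar` is the ℂ-algebra
automorphism of `ℂ(q)` with `bar q = q⁻¹`. -/
theorem statement1 (n : ℕ) (hn : 2 ≤ n)
    (bar : RatFunc ℂ ≃ₐ[ℂ] RatFunc ℂ) (hbar : bar RatFunc.X = (RatFunc.X)⁻¹)
    (ρ : BraidGroup n →* GL (Fin (n - 1)) (RatFunc ℂ))
    (hρ : ∀ i : Fin (n - 1),
      (ρ (braidσ n i) : Matrix (Fin (n - 1)) (Fin (n - 1)) (RatFunc ℂ)) = burauMat n i)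
    (β : BraidGroup n) (v w : Fin (n - 1) → RatFunc ℂ) :
    burauForm n bar ((ρ β : Matrix (Fin (n - 1)) (Fin (n - 1)) (RatFunc ℂ)).mulVec v)
        ((ρ β : Matrix (Fin (n - 1)) (Fin (n - 1)) (RatFunc ℂ)).mulVec w) =
      burauForm n bar v w :=
  statement1_general n bar hbar ρ hρ β v w
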